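/- arXiv:2209.07995 — 2 statements merged into one kernel-verified Lean document; each statement's English description precedes it below -/
import Mathlib

section
/- Continuous q²-Hermite identification: q^{-n/2} (-q;q)_n R_n(z; q^{1/2}, -q^{1/2}, 0, 0 | q) = H_n((z+z^{-1})/2 | q²), where H_n(·|q) denotes the continuous q-Hermite polynomial defined by H_n((z+z^{-1})/2 | q) = Σ_{k=0}^n [(q;q)_n / ((q;q)_k (q;q)_{n-k})] z^{n-2k}. -/
/-- q-shifted factorial `(b;q)_k`. -/
noncomputable def qp (q b : ℂ) (k : ℕ) : ℂ := ∏ j ∈ Finset.range k, (1 - b * q ^ j)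

/-- Askey–Wilson polynomial `R_n(z;a,b,c,d|q)` as a terminating ₄φ₃ sum
(with `c = d = 0` it degenerates to the stated ₃φ₂ with one lower parameter 0). -/
noncomputable def AW (q a b c d z : ℂ) (n : ℕ) : ℂ :=
  ∑ k ∈ Finset.range (n + 1),
    qp q (q ^ (-(n : ℤ))) k * qp q (q ^ ((n : ℤ) - 1) * (a * b * c * d)) k *
      qp q (a * z) k * qp q (a * z⁻¹) k /
      (qp q q k * qp q (a * b) k * qp q (a * c) k * qp q (a * d) k) * q ^ k

/-- Continuous q-Hermite polynomial `H_n((z+z⁻¹)/2 | q)` as a Laurent sum in `z`. -/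
noncomputable def cqHermite (q z : ℂ) (n : ℕ) : ℂ :=
  ∑ k ∈ Finset.range (n + 1),
    qp q q n / (qp q q k * qp q q (n - k)) * z ^ ((n : ℤ) - 2 * (k : ℤ))

/-!
Both sides satisfy `y (n + 2) = (z + z⁻¹) y (n + 1) - (1 - q ^ (2 (n + 1))) y n` with `y 0 = 1` and
`y 1 = z + z⁻¹`.

On the right, `H_n(x | Q) = z ^ n h_n(z⁻²)` with the Rogers–Szegő polynomial
`h_n(w) = ∑ [n, k]_Q w ^ k`, whose recurrence `h_{n+2} = (1 + w) h_{n+1} - (1 - Q ^ (n + 1)) w h_n`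
is a Pascal-type identity for Gaussian binomials.

On the left, `a ^ (-n) (ab; q)_n R_n(z; a, b, 0, 0 | q)` is the Al-Salam–Chihara polynomial `Q_n`,
taken at `a = √q`, `b = -√q`. Summation by parts, using a first-order recurrence of the summand
in `k` and a contiguous relation of `(t; q)_k` in `t`, gives
`Q_{n+2} = (z + z⁻¹ - (a + b) q ^ (n + 1)) Q_{n+1} - (1 - q ^ (n + 1)) (1 - ab q ^ n) Q_n`,
which for `a + b = 0`, `ab = -q` is the recurrence above.
-/

open Finset

section QPochhammer

variable (q : ℂ)

lemma qp_zero (b : ℂ) : qp q b 0 = 1 := prod_range_zero _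

lemma qp_succ (b : ℂ) (k : ℕ) : qp q b (k + 1) = qp q b k * (1 - b * q ^ k) :=
  prod_range_succ _ _

lemma qp_succ' (b : ℂ) (k : ℕ) : qp q b (k + 1) = (1 - b) * qp q (b * q) k := by
  simp only [qp, prod_range_succ', pow_zero, mul_one, pow_succ, mul_assoc, mul_comm q]
  ring

lemma qp_zero_left (k : ℕ) : qp q 0 k = 1 := by simp [qp]

lemma qp_zpow_neg_of_lt {n k : ℕ} (hq0 : q ≠ 0) (h : n < k) : qp q (q ^ (-(n : ℤ))) k = 0 :=
  prod_eq_zero (mem_range.mpr h) (by simp [zpow_neg, inv_mul_cancel₀ (pow_ne_zero n hq0)])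

variable {q}

lemma one_sub_mul_pow_ne_zero (hq : ∀ m : ℕ, 1 ≤ m → q ^ m ≠ 1) (k : ℕ) : 1 - q * q ^ k ≠ 0 :=
  sub_ne_zero.mpr (by rw [← pow_succ']; exact (hq (k + 1) k.succ_pos).symm)

lemma one_add_mul_pow_ne_zero (hq : ∀ m : ℕ, 1 ≤ m → q ^ m ≠ 1) (k : ℕ) : 1 + q * q ^ k ≠ 0 := by
  intro h
  refine hq (2 * (k + 1)) (by omega) ?_
  rw [pow_mul', pow_succ' q k, eq_neg_of_add_eq_zero_right h]
  norm_num

lemma qp_self_ne_zero (hq : ∀ m : ℕ, 1 ≤ m → q ^ m ≠ 1) (k : ℕ) : qp q q k ≠ 0 :=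
  prod_ne_zero_iff.mpr fun j _ => one_sub_mul_pow_ne_zero hq j

end QPochhammer

section RogersSzego

noncomputable def qBinomial (Q : ℂ) (n k : ℕ) : ℂ := qp Q Q n / (qp Q Q k * qp Q Q (n - k))

noncomputable def rogersSzego (Q : ℂ) (n : ℕ) (w : ℂ) : ℂ :=
  ∑ k ∈ range (n + 1), qBinomial Q n k * w ^ k

variable {Q : ℂ}

lemma qBinomial_zero_right (hQ : ∀ m : ℕ, 1 ≤ m → Q ^ m ≠ 1) (n : ℕ) : qBinomial Q n 0 = 1 := by
  simp [qBinomial, qp_zero, div_self (qp_self_ne_zero hQ n)]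

lemma qBinomial_self (hQ : ∀ m : ℕ, 1 ≤ m → Q ^ m ≠ 1) (n : ℕ) : qBinomial Q n n = 1 := by
  simp [qBinomial, qp_zero, div_self (qp_self_ne_zero hQ n)]

lemma qBinomial_add_two (hQ : ∀ m : ℕ, 1 ≤ m → Q ^ m ≠ 1) {n k : ℕ} (hk : k ≤ n) :
    qBinomial Q (n + 2) (k + 1) = qBinomial Q (n + 1) (k + 1) + qBinomial Q (n + 1) k
      - (1 - Q ^ (n + 1)) * qBinomial Q n k := by
  obtain ⟨r, rfl⟩ := Nat.exists_eq_add_of_le hk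
  have hpk := qp_self_ne_zero hQ k
  have hpr := qp_self_ne_zero hQ r
  have hk1 := one_sub_mul_pow_ne_zero hQ k
  have hr1 := one_sub_mul_pow_ne_zero hQ r
  simp only [qBinomial, show k + r + 2 - (k + 1) = r + 1 by omega,
    show k + r + 1 - (k + 1) = r by omega, show k + r + 1 - k = r + 1 by omega,
    show k + r - k = r by omega]
  rw [qp_succ Q Q (k + r + 1), qp_succ Q Q (k + r), qp_succ Q Q k, qp_succ Q Q r]
  field_simp
  ring

lemma rogersSzego_add_two (hQ : ∀ m : ℕ, 1 ≤ m → Q ^ m ≠ 1) (n : ℕ) (w : ℂ) :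
    rogersSzego Q (n + 2) w
      = (1 + w) * rogersSzego Q (n + 1) w - (1 - Q ^ (n + 1)) * w * rogersSzego Q n w := by
  have top : ∑ k ∈ range (n + 3), qBinomial Q (n + 2) k * w ^ k
      = ∑ k ∈ range (n + 1), qBinomial Q (n + 2) (k + 1) * w ^ (k + 1) + w ^ (n + 2) + 1 := by
    rw [sum_range_succ', sum_range_succ, qBinomial_self hQ, qBinomial_zero_right hQ]
    ring
  have mid : ∑ k ∈ range (n + 2), qBinomial Q (n + 1) k * w ^ k
      = ∑ k ∈ range (n + 1), qBinomial Q (n + 1) (k + 1) * w ^ (k + 1) + 1 := by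
    rw [sum_range_succ', qBinomial_zero_right hQ]
    ring
  have mid_mul : w * ∑ k ∈ range (n + 2), qBinomial Q (n + 1) k * w ^ k
      = ∑ k ∈ range (n + 1), qBinomial Q (n + 1) k * w ^ (k + 1) + w ^ (n + 2) := by
    rw [sum_range_succ, qBinomial_self hQ, mul_add, mul_sum]
    exact congrArg₂ _ (sum_congr rfl fun k _ => by ring) (by ring)
  have low_mul : w * ∑ k ∈ range (n + 1), qBinomial Q n k * w ^ k
      = ∑ k ∈ range (n + 1), qBinomial Q n k * w ^ (k + 1) := by
    rw [mul_sum]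
    exact sum_congr rfl fun k _ => by ring
  have pascal : ∑ k ∈ range (n + 1), qBinomial Q (n + 2) (k + 1) * w ^ (k + 1)
      = ∑ k ∈ range (n + 1), (qBinomial Q (n + 1) (k + 1) + qBinomial Q (n + 1) k
          - (1 - Q ^ (n + 1)) * qBinomial Q n k) * w ^ (k + 1) :=
    sum_congr rfl fun k hk => by rw [qBinomial_add_two hQ (by simpa [Nat.lt_succ_iff] using hk)]
  simp only [rogersSzego]
  rw [top, add_mul, one_mul, mid_mul, mul_assoc, low_mul, mid, pascal]
  simp only [add_mul, sub_mul, sum_add_distrib, sum_sub_distrib, mul_sum, mul_assoc]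
  ring

lemma cqHermite_eq_rogersSzego {z : ℂ} (hz : z ≠ 0) (n : ℕ) :
    cqHermite Q z n = z ^ n * rogersSzego Q n (z⁻¹ ^ 2) := by
  rw [cqHermite, rogersSzego, mul_sum]
  refine sum_congr rfl fun k _ => ?_
  rw [zpow_sub₀ hz, zpow_natCast, ← pow_mul, inv_pow, zpow_mul]
  simp only [qBinomial, div_eq_mul_inv, mul_inv_rev, zpow_natCast, zpow_ofNat]
  ring

lemma cqHermite_zero (z : ℂ) : cqHermite Q z 0 = 1 := by
  simp [cqHermite, qp_zero]

lemma cqHermite_one (hQ : Q ≠ 1) {z : ℂ} (hz : z ≠ 0) : cqHermite Q z 1 = z + z⁻¹ := by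
  have h : qp Q Q 1 ≠ 0 := by simpa [qp_succ, qp_zero, sub_eq_zero] using hQ.symm
  simp only [cqHermite_eq_rogersSzego hz, rogersSzego, qBinomial, sum_range_succ, range_one,
    sum_singleton, qp_zero, tsub_zero, tsub_self, one_mul, mul_one, div_self h, pow_zero, pow_one]
  field_simp

lemma cqHermite_add_two (hQ : ∀ m : ℕ, 1 ≤ m → Q ^ m ≠ 1) {z : ℂ} (hz : z ≠ 0) (n : ℕ) :
    cqHermite Q z (n + 2)
      = (z + z⁻¹) * cqHermite Q z (n + 1) - (1 - Q ^ (n + 1)) * cqHermite Q z n := by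
  simp only [cqHermite_eq_rogersSzego hz, rogersSzego_add_two hQ]
  field_simp
  ring

end RogersSzego

section AlSalamChihara

variable {q : ℂ}

lemma qp_contiguous (hq0 : q ≠ 0) {t : ℂ} (ht : t ≠ 0) (a b : ℂ) (m : ℕ) :
    qp q t (m + 1) * ((q ^ (m + 1))⁻¹ * (1 + a ^ 2 * q ^ (2 * (m + 1))))
      - qp q t m * ((q ^ (m + 1))⁻¹ * (1 - q * q ^ m) * (1 - a * b * q ^ m))
    = (1 - a * b * t⁻¹) * qp q (t * q⁻¹) (m + 1) + a * (a + b) * t⁻¹ * qp q t (m + 1)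
      + a ^ 2 * (1 - t⁻¹) * qp q (t * q) (m + 1) := by
  have down : qp q (t * q⁻¹) (m + 1) = (1 - t * q⁻¹) * qp q t m := by
    rw [qp_succ', inv_mul_cancel_right₀ hq0]
  have up : (1 - t) * qp q (t * q) (m + 1)
      = qp q t m * (1 - t * q ^ m) * (1 - t * q ^ (m + 1)) := by
    rw [← qp_succ', qp_succ, qp_succ]
  rw [down, show a ^ 2 * (1 - t⁻¹) * qp q (t * q) (m + 1)
      = -a ^ 2 * t⁻¹ * ((1 - t) * qp q (t * q) (m + 1)) by field_simp; ring, up, qp_succ]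
  field_simp
  ring

noncomputable def alSalamChiharaTerm (q a b z : ℂ) (k : ℕ) : ℂ :=
  qp q (a * z) k * qp q (a * z⁻¹) k / (qp q q k * qp q (a * b) k) * q ^ k

lemma mul_alSalamChiharaTerm (hq0 : q ≠ 0) {a b z : ℂ} (hz : z ≠ 0) {k : ℕ}
    (hk : (1 - q * q ^ k) * (1 - a * b * q ^ k) ≠ 0) :
    a * (z + z⁻¹) * alSalamChiharaTerm q a b z k
      = (q ^ k)⁻¹ * (1 + a ^ 2 * q ^ (2 * k)) * alSalamChiharaTerm q a b z k
        - (q ^ (k + 1))⁻¹ * (1 - q * q ^ k) * (1 - a * b * q ^ k)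
          * alSalamChiharaTerm q a b z (k + 1) := by
  have ratio : (1 - q * q ^ k) * (1 - a * b * q ^ k) * alSalamChiharaTerm q a b z (k + 1)
      = q * ((1 - a * z * q ^ k) * (1 - a * z⁻¹ * q ^ k)) * alSalamChiharaTerm q a b z k := by
    simp only [alSalamChiharaTerm, qp_succ]
    by_cases hD : qp q q k * qp q (a * b) k = 0
    · have hD' : qp q q k * (1 - q * q ^ k) * (qp q (a * b) k * (1 - a * b * q ^ k)) = 0 := by
        linear_combination (1 - q * q ^ k) * (1 - a * b * q ^ k) * hD
      simp [hD, hD']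
    · obtain ⟨hD1, hD2⟩ := mul_ne_zero_iff.mp hD
      obtain ⟨hk1, hk2⟩ := mul_ne_zero_iff.mp hk
      have hk2' : 1 - q ^ k * a * b ≠ 0 := by convert hk2 using 2; ring
      field_simp
      ring
  linear_combination (norm := skip) (q ^ (k + 1))⁻¹ * ratio
  field_simp
  ring

noncomputable def alSalamChiharaSum (q a b z t : ℂ) (N : ℕ) : ℂ :=
  ∑ k ∈ range N, qp q t k * alSalamChiharaTerm q a b z k

-- Summation by parts against `mul_alSalamChiharaTerm` (the boundary term vanishes by `hN`),
-- then `qp_contiguous` termwise.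
lemma alSalamChiharaSum_contiguous (hq0 : q ≠ 0) (hq : ∀ m : ℕ, 1 ≤ m → q ^ m ≠ 1) {a b z t : ℂ}
    (hab : ∀ k : ℕ, a * b * q ^ k ≠ 1) (hz : z ≠ 0) (ht : t ≠ 0) {N : ℕ}
    (hN : qp q t (N + 1) = 0) :
    a * (z + z⁻¹) * alSalamChiharaSum q a b z t (N + 2)
      = (1 - a * b * t⁻¹) * alSalamChiharaSum q a b z (t * q⁻¹) (N + 2)
        + a * (a + b) * t⁻¹ * alSalamChiharaSum q a b z t (N + 2)
        + a ^ 2 * (1 - t⁻¹) * alSalamChiharaSum q a b z (t * q) (N + 2) := by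
  set u := alSalamChiharaTerm q a b z
  have step (k : ℕ) : a * (z + z⁻¹) * u k = (q ^ k)⁻¹ * (1 + a ^ 2 * q ^ (2 * k)) * u k
      - (q ^ (k + 1))⁻¹ * (1 - q * q ^ k) * (1 - a * b * q ^ k) * u (k + 1) :=
    mul_alSalamChiharaTerm hq0 hz (mul_ne_zero (one_sub_mul_pow_ne_zero hq k)
      (sub_ne_zero.mpr (hab k).symm))
  have shift (c : ℂ) : alSalamChiharaSum q a b z c (N + 2)
      = u 0 + ∑ k ∈ range (N + 1), qp q c (k + 1) * u (k + 1) := by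
    rw [alSalamChiharaSum, sum_range_succ', qp_zero, one_mul, add_comm]
  have top : ∑ k ∈ range (N + 2),
        qp q t k * ((q ^ (k + 1))⁻¹ * (1 - q * q ^ k) * (1 - a * b * q ^ k) * u (k + 1))
      = ∑ k ∈ range (N + 1),
        qp q t k * ((q ^ (k + 1))⁻¹ * (1 - q * q ^ k) * (1 - a * b * q ^ k) * u (k + 1)) := by
    rw [sum_range_succ, hN, zero_mul, add_zero]
  calc a * (z + z⁻¹) * alSalamChiharaSum q a b z t (N + 2)
      = ∑ k ∈ range (N + 2), qp q t k * ((q ^ k)⁻¹ * (1 + a ^ 2 * q ^ (2 * k)) * u k)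
        - ∑ k ∈ range (N + 2),
          qp q t k * ((q ^ (k + 1))⁻¹ * (1 - q * q ^ k) * (1 - a * b * q ^ k) * u (k + 1)) := by
        rw [alSalamChiharaSum, ← sum_sub_distrib, mul_sum]
        exact sum_congr rfl fun k _ => by rw [mul_left_comm, step, mul_sub]
    _ = (1 + a ^ 2) * u 0 + ∑ k ∈ range (N + 1),
          (qp q t (k + 1) * ((q ^ (k + 1))⁻¹ * (1 + a ^ 2 * q ^ (2 * (k + 1))))
            - qp q t k * ((q ^ (k + 1))⁻¹ * (1 - q * q ^ k) * (1 - a * b * q ^ k)))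
          * u (k + 1) := by
        rw [top, sum_range_succ', add_sub_right_comm, ← sum_sub_distrib]
        simp only [qp_zero, pow_zero, inv_one, mul_zero, mul_one, one_mul]
        rw [add_comm]
        exact congrArg₂ _ rfl (sum_congr rfl fun k _ => by ring)
    _ = _ := by
        rw [shift, shift, shift]
        simp only [qp_contiguous hq0 ht]
        simp only [add_mul, sum_add_distrib, mul_add, mul_sum, mul_assoc]
        ring

lemma AW_zero_zero_eq_alSalamChiharaSum (hq0 : q ≠ 0) (a b z : ℂ) {n N : ℕ} (hN : n < N) :
    AW q a b 0 0 z n = alSalamChiharaSum q a b z (q ^ (-(n : ℤ))) N := by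
  rw [AW, alSalamChiharaSum, ← sum_subset (range_subset_range.mpr hN) fun k _ hk => ?_]
  · refine sum_congr rfl fun k _ => ?_
    simp only [alSalamChiharaTerm, mul_zero, qp_zero_left]
    ring
  · rw [qp_zpow_neg_of_lt q hq0 (by simpa using hk), zero_mul]

lemma AW_zero_zero_add_two (hq0 : q ≠ 0) (hq : ∀ m : ℕ, 1 ≤ m → q ^ m ≠ 1) {a b z : ℂ}
    (hab : ∀ k : ℕ, a * b * q ^ k ≠ 1) (hz : z ≠ 0) (n : ℕ) :
    a * (z + z⁻¹) * AW q a b 0 0 z (n + 1)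
      = (1 - a * b * q ^ (n + 1)) * AW q a b 0 0 z (n + 2)
        + a * (a + b) * q ^ (n + 1) * AW q a b 0 0 z (n + 1)
        + a ^ 2 * (1 - q ^ (n + 1)) * AW q a b 0 0 z n := by
  have down : q ^ (-((n + 1 : ℕ) : ℤ)) * q⁻¹ = q ^ (-((n + 2 : ℕ) : ℤ)) := by
    rw [← zpow_sub_one₀ hq0]; push_cast; ring_nf
  have up : q ^ (-((n + 1 : ℕ) : ℤ)) * q = q ^ (-(n : ℤ)) := by
    rw [← zpow_add_one₀ hq0]; push_cast; ring_nf
  have inv : (q ^ (-((n + 1 : ℕ) : ℤ)))⁻¹ = q ^ (n + 1) := by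
    rw [zpow_neg, inv_inv, zpow_natCast]
  have := alSalamChiharaSum_contiguous hq0 hq hab hz (zpow_ne_zero _ hq0)
    (qp_zpow_neg_of_lt q hq0 (show n + 1 < n + 1 + 1 by omega))
  rw [down, up, inv] at this
  rwa [AW_zero_zero_eq_alSalamChiharaSum hq0 a b z (show n < n + 1 + 2 by omega),
    AW_zero_zero_eq_alSalamChiharaSum hq0 a b z (show n + 1 < n + 1 + 2 by omega),
    AW_zero_zero_eq_alSalamChiharaSum hq0 a b z (show n + 2 < n + 1 + 2 by omega)]

end AlSalamChihara

section AlSalamChiharaNormalized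

noncomputable def alSalamChihara (q a b z : ℂ) (n : ℕ) : ℂ :=
  a ^ (-(n : ℤ)) * qp q (a * b) n * AW q a b 0 0 z n

variable {q a b z : ℂ}

lemma alSalamChihara_zero : alSalamChihara q a b z 0 = 1 := by
  simp [alSalamChihara, AW, qp_zero]

lemma alSalamChihara_one (hq0 : q ≠ 0) (hq1 : q ≠ 1) (ha : a ≠ 0) (hab : a * b ≠ 1) (hz : z ≠ 0) :
    alSalamChihara q a b z 1 = z + z⁻¹ - (a + b) := by
  have h1 : 1 - q ≠ 0 := sub_ne_zero.mpr hq1.symm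
  have h2 : 1 - a * b ≠ 0 := sub_ne_zero.mpr hab.symm
  simp only [alSalamChihara, AW, Nat.cast_one, Int.reduceNeg, zpow_neg, zpow_ofNat, pow_one,
    qp_succ, qp_zero, pow_zero, mul_one, one_mul, Nat.reduceAdd, sub_self, mul_zero,
    sum_range_succ, range_one, sum_singleton, div_self one_ne_zero, sub_zero]
  field_simp
  ring

lemma alSalamChihara_add_two (hq0 : q ≠ 0) (hq : ∀ m : ℕ, 1 ≤ m → q ^ m ≠ 1) (ha : a ≠ 0)
    (hab : ∀ k : ℕ, a * b * q ^ k ≠ 1) (hz : z ≠ 0) (n : ℕ) :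
    alSalamChihara q a b z (n + 2)
      = (z + z⁻¹ - (a + b) * q ^ (n + 1)) * alSalamChihara q a b z (n + 1)
        - (1 - q ^ (n + 1)) * (1 - a * b * q ^ n) * alSalamChihara q a b z n := by
  have hrec := AW_zero_zero_add_two hq0 hq hab hz n
  simp only [alSalamChihara, qp_succ, zpow_neg, zpow_natCast]
  linear_combination (norm := skip)
    -(a ^ (n + 2))⁻¹ * qp q (a * b) n * (1 - a * b * q ^ n) * hrec
  field_simp
  ring

end AlSalamChiharaNormalized

lemma eq_of_two_step_recurrence {α : Type*} {f g : ℕ → α} (F : ℕ → α → α → α)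
    (hf : ∀ n, f (n + 2) = F n (f n) (f (n + 1))) (hg : ∀ n, g (n + 2) = F n (g n) (g (n + 1)))
    (h0 : f 0 = g 0) (h1 : f 1 = g 1) : f = g := by
  funext n
  induction n using Nat.twoStepInduction with
  | zero => exact h0
  | one => exact h1
  | more n ihn ihn1 => rw [hf, hg, ihn, ihn1]

theorem stmt11_general (q s z : ℂ) (n : ℕ)
    (hq : q ≠ 0) (hs : s ^ 2 = q) (hs0 : s ≠ 0) (hz : z ≠ 0)
    (hroot : ∀ m : ℕ, 1 ≤ m → q ^ m ≠ 1) :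
    s ^ (-(n : ℤ)) * qp q (-q) n * AW q s (-s) 0 0 z n = cqHermite (q ^ 2) z n := by
  have hss : s * -s = -q := by rw [← hs]; ring
  have hab (k : ℕ) : s * -s * q ^ k ≠ 1 := fun h =>
    one_add_mul_pow_ne_zero hroot k (by linear_combination -h + q ^ k * hss)
  have hroot2 : ∀ m : ℕ, 1 ≤ m → (q ^ 2) ^ m ≠ 1 := fun m hm => by
    rw [← pow_mul]; exact hroot _ (by omega)
  have key : alSalamChihara q s (-s) z = cqHermite (q ^ 2) z := by
    refine eq_of_two_step_recurrence (fun n x y => (z + z⁻¹) * y - (1 - (q ^ 2) ^ (n + 1)) * x)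
      (fun n => ?_) (cqHermite_add_two hroot2 hz) ?_ ?_
    · rw [alSalamChihara_add_two hq hroot hs0 hab hz, hss]
      ring
    · rw [alSalamChihara_zero, cqHermite_zero]
    · rw [alSalamChihara_one hq (by simpa using hroot 1 le_rfl) hs0 (by simpa using hab 0) hz,
        cqHermite_one (by simpa using hroot2 1 le_rfl) hz]
      ring
  simpa [alSalamChihara, hss] using congrFun key n

/-- Continuous q²-Hermite identification:
`q^{-n/2} (-q;q)_n R_n(z; √q, -√q, 0, 0 | q) = H_n((z+z⁻¹)/2 | q²)`. -/
theorem stmt11 (q s z : ℂ) (n : ℕ)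
    (hq : q ≠ 0) (hs : s ^ 2 = q) (hs0 : s ≠ 0) (hz : z ≠ 0)
    (hroot : ∀ m : ℕ, 1 ≤ m → q ^ m ≠ 1)
    (hmq : ∀ k ∈ Finset.range (n + 1), qp q (-q) k ≠ 0) :
    s ^ (-(n : ℤ)) * qp q (-q) n * AW q s (-s) 0 0 z n = cqHermite (q ^ 2) z n :=
  stmt11_general q s z n hq hs hs0 hz hroot
end

section
/- Dual Zhedanov relation for the Verde-Star operator pair: with K_1, K_2 and parameters as in the Verde-Star setup, (q+q^{-1}) K_1 K_2 K_1 − K_1² K_2 − K_2 K_1² = C_2 K_2 + D K_1 + G_2, where C_2 = (q−q^{-1})² a_1 a_2, D = −(q^{1/2}−q^{-1/2})²((q^{-1/2}a_1 − q^{1/2}a_2)(q^{-1/2}b_1 − q^{1/2}b_2) + d_1 + d_2), and G_2 = (q^{1/2}−q^{-1/2})(q−q^{-1})(q^{-1/2}a_1 d_2 + q^{1/2}a_2 d_1). -/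
/-!
`K₁` raises and `K₂` lowers the index by at most one, so at `n` both sides of the relation are
combinations of `f (n - 1), …, f (n + 2)`, and the relation splits into four scalar identities
between `h`, `g` and `x`; at `n = 0` the missing term `f (-1)` is harmless because `g 0 = 0`.
For `x_k = b₁q^k + b₂q^{-k}` and `h_k = a₁q^k + a₂q^{-k}` the identities for `f (n + 2)` and
`f (n - 1)` are the recurrence `(q + q⁻¹) x_{k+1} = x_k + x_{k+2}` and the invariance of
`(q + q⁻¹) h_k h_{k+1} - h_k² - h_{k+1}²`. The other two are identities of Laurent polynomials
in `q^k`, whose leading terms cancel precisely because `d₃ = q⁻¹a₁b₁` and `d₄ = qa₂b₂`.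
-/

variable {F : Type*} [Field F]

/-- The operator `K₁`: `(K₁ f)_n = h_n f_n + g_{n+1} f_{n+1}`. -/
def K1 (h g : ℕ → F) (f : ℕ → F) : ℕ → F := fun n => h n * f n + g (n + 1) * f (n + 1)

/-- The operator `K₂`: `(K₂ f)_n = x_n f_n + f_{n-1}` (with `f_{-1} = 0`). -/
def K2 (x : ℕ → F) (f : ℕ → F) : ℕ → F :=
  fun n => x n * f n + if n = 0 then 0 else f (n - 1)

/-- The term `h (n - 1) * g n` is junk at `n = 0` (where `n - 1 = 0`), but vanishes as `g 0 = 0`. -/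
theorem zhedanov_relation_of_coefficients (c C₂ D G₂ : F) (h g x : ℕ → F) (hg0 : g 0 = 0)
    (hsub : ∀ n, c * h n * h (n + 1) - h n ^ 2 - h (n + 1) ^ 2 = C₂)
    (hdiag : ∀ n, (c - 2) * h n ^ 2 * x n + (c - 1) * h n * (g n + g (n + 1))
      - h (n - 1) * g n - h (n + 1) * g (n + 1) = C₂ * x n + D * h n + G₂)
    (hsup : ∀ n, (c - 1) * (h n * x n + h (n + 1) * x (n + 1)) - h n * x (n + 1)
      - h (n + 1) * x n + c * g (n + 1) - g n - g (n + 2) = D)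
    (hsup₂ : ∀ n, c * x (n + 1) = x n + x (n + 2))
    (f : ℕ → F) (n : ℕ) :
    c * K1 h g (K2 x (K1 h g f)) n - K1 h g (K1 h g (K2 x f)) n - K2 x (K1 h g (K1 h g f)) n
      = C₂ * K2 x f n + D * K1 h g f n + G₂ * f n := by
  cases n with
  | zero =>
    have hdiag₀ := hdiag 0
    simp only [hg0, mul_zero, sub_zero, zero_add] at hdiag₀
    simp only [K1, K2, zero_add, Nat.add_one_ne_zero, Nat.add_sub_cancel, reduceIte]
    linear_combination f 0 * hdiag₀ + g 1 * f 1 * hsup 0 + g 1 * f 1 * hg0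
      + g 1 * g 2 * f 2 * hsup₂ 0
  | succ m =>
    have hdiag_succ := hdiag (m + 1)
    simp only [Nat.add_sub_cancel] at hdiag_succ
    simp only [K1, K2, Nat.add_one_ne_zero, Nat.add_sub_cancel, reduceIte]
    linear_combination f m * hsub m + f (m + 1) * hdiag_succ + g (m + 2) * f (m + 2) * hsup (m + 1)
      + g (m + 2) * g (m + 3) * f (m + 3) * hsup₂ (m + 1)

def laurentSeq (q c₁ c₂ : F) (k : ℤ) : F := c₁ * q ^ k + c₂ * q ^ (-k)

section laurentSeq

variable {q : F}

theorem laurentSeq_recurrence (hq : q ≠ 0) (c₁ c₂ : F) (k : ℤ) :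
    (q + q⁻¹) * laurentSeq q c₁ c₂ (k + 1) = laurentSeq q c₁ c₂ k + laurentSeq q c₁ c₂ (k + 2) := by
  have hqk : q ^ k ≠ 0 := zpow_ne_zero k hq
  simp only [laurentSeq, neg_add, zpow_add₀ hq, zpow_neg, zpow_ofNat]
  field_simp
  ring

theorem laurentSeq_quadratic_invariant (hq : q ≠ 0) (c₁ c₂ : F) (k : ℤ) :
    (q + q⁻¹) * laurentSeq q c₁ c₂ k * laurentSeq q c₁ c₂ (k + 1)
      - laurentSeq q c₁ c₂ k ^ 2 - laurentSeq q c₁ c₂ (k + 1) ^ 2 = (q - q⁻¹) ^ 2 * c₁ * c₂ := by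
  have hqk : q ^ k ≠ 0 := zpow_ne_zero k hq
  simp only [laurentSeq, neg_add, zpow_add₀ hq, zpow_neg, zpow_one]
  field_simp
  ring

end laurentSeq

def verdeStarG (q d₀ d₁ d₂ d₃ d₄ : F) (k : ℤ) : F :=
  laurentSeq q d₃ d₄ (2 * k) + laurentSeq q d₁ d₂ k + d₀

section VerdeStar

variable {q s a₁ a₂ b₁ b₂ d₀ d₁ d₂ d₃ d₄ : F}

theorem verdeStarG_zero (hsum : d₀ + d₁ + d₂ + d₃ + d₄ = 0) : verdeStarG q d₀ d₁ d₂ d₃ d₄ 0 = 0 := by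
  simp only [verdeStarG, laurentSeq, mul_zero, neg_zero, zpow_zero, mul_one]
  linear_combination hsum

theorem verdeStar_diag_coeff (hs : s ^ 2 = q) (hs0 : s ≠ 0)
    (hsum : d₀ + d₁ + d₂ + d₃ + d₄ = 0) (hd₃ : d₃ = q⁻¹ * a₁ * b₁) (hd₄ : d₄ = q * a₂ * b₂)
    (k : ℤ) :
    let x := laurentSeq q b₁ b₂
    let h := laurentSeq q a₁ a₂
    let g := verdeStarG q d₀ d₁ d₂ d₃ d₄
    (q + q⁻¹ - 2) * h k ^ 2 * x k + (q + q⁻¹ - 1) * h k * (g k + g (k + 1))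
      - h (k - 1) * g k - h (k + 1) * g (k + 1)
      = (q - q⁻¹) ^ 2 * a₁ * a₂ * x k
        + (-(s - s⁻¹) ^ 2 * ((s⁻¹ * a₁ - s * a₂) * (s⁻¹ * b₁ - s * b₂) + d₁ + d₂)) * h k
        + (s - s⁻¹) * (q - q⁻¹) * (s⁻¹ * a₁ * d₂ + s * a₂ * d₁) := by
  intro x h g
  subst hs hd₃ hd₄
  have hq : s ^ 2 ≠ 0 := pow_ne_zero 2 hs0
  have hqk : (s ^ 2) ^ k ≠ 0 := zpow_ne_zero k hq
  obtain rfl : d₀ = -(d₁ + d₂ + (s ^ 2)⁻¹ * a₁ * b₁ + s ^ 2 * a₂ * b₂) := by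
    linear_combination hsum
  simp only [x, h, g, verdeStarG, laurentSeq, mul_add, neg_add, neg_sub, zpow_add₀ hq,
    zpow_sub₀ hq, zpow_neg, zpow_mul', zpow_ofNat]
  field_simp
  ring

theorem verdeStar_superdiag_coeff (hs : s ^ 2 = q) (hs0 : s ≠ 0)
    (hsum : d₀ + d₁ + d₂ + d₃ + d₄ = 0) (hd₃ : d₃ = q⁻¹ * a₁ * b₁) (hd₄ : d₄ = q * a₂ * b₂)
    (k : ℤ) :
    let x := laurentSeq q b₁ b₂
    let h := laurentSeq q a₁ a₂
    let g := verdeStarG q d₀ d₁ d₂ d₃ d₄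
    (q + q⁻¹ - 1) * (h k * x k + h (k + 1) * x (k + 1)) - h k * x (k + 1) - h (k + 1) * x k
      + (q + q⁻¹) * g (k + 1) - g k - g (k + 2)
      = -(s - s⁻¹) ^ 2 * ((s⁻¹ * a₁ - s * a₂) * (s⁻¹ * b₁ - s * b₂) + d₁ + d₂) := by
  intro x h g
  subst hs hd₃ hd₄
  have hq : s ^ 2 ≠ 0 := pow_ne_zero 2 hs0
  have hqk : (s ^ 2) ^ k ≠ 0 := zpow_ne_zero k hq
  obtain rfl : d₀ = -(d₁ + d₂ + (s ^ 2)⁻¹ * a₁ * b₁ + s ^ 2 * a₂ * b₂) := by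
    linear_combination hsum
  simp only [x, h, g, verdeStarG, laurentSeq, mul_add, neg_add, zpow_add₀ hq, zpow_neg,
    zpow_mul', zpow_ofNat]
  field_simp
  ring

theorem verdeStar_zhedanov_relation (hq : q ≠ 0) (hs : s ^ 2 = q) (hs0 : s ≠ 0)
    (hsum : d₀ + d₁ + d₂ + d₃ + d₄ = 0) (hd₃ : d₃ = q⁻¹ * a₁ * b₁) (hd₄ : d₄ = q * a₂ * b₂)
    (f : ℕ → F) (n : ℕ) :
    let x := fun n : ℕ => laurentSeq q b₁ b₂ n
    let h := fun n : ℕ => laurentSeq q a₁ a₂ n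
    let g := fun n : ℕ => verdeStarG q d₀ d₁ d₂ d₃ d₄ n
    (q + q⁻¹) * K1 h g (K2 x (K1 h g f)) n
        - K1 h g (K1 h g (K2 x f)) n - K2 x (K1 h g (K1 h g f)) n
      = (q - q⁻¹) ^ 2 * a₁ * a₂ * K2 x f n
        + (-(s - s⁻¹) ^ 2 * ((s⁻¹ * a₁ - s * a₂) * (s⁻¹ * b₁ - s * b₂) + d₁ + d₂))
            * K1 h g f n
        + (s - s⁻¹) * (q - q⁻¹) * (s⁻¹ * a₁ * d₂ + s * a₂ * d₁) * f n := by
  intro x h g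
  have hg0 : g 0 = 0 := verdeStarG_zero hsum
  refine zhedanov_relation_of_coefficients _ _ _ _ h g x hg0 ?_ ?_ ?_ ?_ f n
  · exact fun n => by exact_mod_cast laurentSeq_quadratic_invariant hq a₁ a₂ n
  · rintro (_ | m)
    · simpa [x, h, g, verdeStarG_zero hsum] using verdeStar_diag_coeff hs hs0 hsum hd₃ hd₄ 0
    · simpa [x, h, g] using verdeStar_diag_coeff hs hs0 hsum hd₃ hd₄ (m + 1)
  · exact fun n => by exact_mod_cast verdeStar_superdiag_coeff hs hs0 hsum hd₃ hd₄ n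
  · exact fun n => by exact_mod_cast laurentSeq_recurrence hq b₁ b₂ n

end VerdeStar

theorem stmt15_general (q s a1 a2 b1 b2 d0 d1 d2 d3 d4 : F)
    (hq : q ≠ 0) (hs : s ^ 2 = q) (hs0 : s ≠ 0)
    (hsum : d0 + d1 + d2 + d3 + d4 = 0)
    (hd3 : d3 = q⁻¹ * a1 * b1) (hd4 : d4 = q * a2 * b2)
    (x h g : ℕ → F)
    (hx : ∀ k, x k = b1 * q ^ k + b2 * q ^ (-(k : ℤ)))
    (hh : ∀ k, h k = a1 * q ^ k + a2 * q ^ (-(k : ℤ)))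
    (hg : ∀ k, g k = d3 * q ^ (2 * k) + d1 * q ^ k + d0 +
        d2 * q ^ (-(k : ℤ)) + d4 * q ^ (-(2 * k : ℤ))) :
    ∀ (f : ℕ → F) (n : ℕ),
      (q + q⁻¹) * K1 h g (K2 x (K1 h g f)) n
          - K1 h g (K1 h g (K2 x f)) n - K2 x (K1 h g (K1 h g f)) n
        = (q - q⁻¹) ^ 2 * a1 * a2 * K2 x f n
          + (-(s - s⁻¹) ^ 2 * ((s⁻¹ * a1 - s * a2) * (s⁻¹ * b1 - s * b2) + d1 + d2))
              * K1 h g f n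
          + (s - s⁻¹) * (q - q⁻¹) * (s⁻¹ * a1 * d2 + s * a2 * d1) * f n := by
  obtain rfl : x = fun n : ℕ => laurentSeq q b1 b2 n := funext fun n => by
    simp [hx, laurentSeq]
  obtain rfl : h = fun n : ℕ => laurentSeq q a1 a2 n := funext fun n => by
    simp [hh, laurentSeq]
  obtain rfl : g = fun n : ℕ => verdeStarG q d0 d1 d2 d3 d4 n := funext fun n => by
    rw [hg, verdeStarG, laurentSeq, laurentSeq, ← zpow_natCast q (2 * n), ← zpow_natCast q n]
    push_cast
    ring
  exact verdeStar_zhedanov_relation hq hs hs0 hsum hd3 hd4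

/-- Dual Zhedanov relation
`(q+q⁻¹) K₁K₂K₁ − K₁²K₂ − K₂K₁² = C₂K₂ + DK₁ + G₂`
for the Verde-Star operator pair, with
`x_k = b₁q^k + b₂q^{-k}`, `h_k = a₁q^k + a₂q^{-k}`,
`g_k = d₃q^{2k} + d₁q^k + d₀ + d₂q^{-k} + d₄q^{-2k}`,
`Σdᵢ = 0`, `d₃ = q⁻¹a₁b₁`, `d₄ = qa₂b₂`, and `s` a square root of `q`. -/
theorem stmt15 (q s a1 a2 b1 b2 d0 d1 d2 d3 d4 : F)
    (hq : q ≠ 0) (hq2 : q ^ 2 ≠ 1) (hs : s ^ 2 = q) (hs0 : s ≠ 0)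
    (hsum : d0 + d1 + d2 + d3 + d4 = 0)
    (hd3 : d3 = q⁻¹ * a1 * b1) (hd4 : d4 = q * a2 * b2)
    (x h g : ℕ → F)
    (hx : ∀ k, x k = b1 * q ^ k + b2 * q ^ (-(k : ℤ)))
    (hh : ∀ k, h k = a1 * q ^ k + a2 * q ^ (-(k : ℤ)))
    (hg : ∀ k, g k = d3 * q ^ (2 * k) + d1 * q ^ k + d0 +
        d2 * q ^ (-(k : ℤ)) + d4 * q ^ (-(2 * k : ℤ))) :
    ∀ (f : ℕ → F) (n : ℕ),
      (q + q⁻¹) * K1 h g (K2 x (K1 h g f)) n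
          - K1 h g (K1 h g (K2 x f)) n - K2 x (K1 h g (K1 h g f)) n
        = (q - q⁻¹) ^ 2 * a1 * a2 * K2 x f n
          + (-(s - s⁻¹) ^ 2 * ((s⁻¹ * a1 - s * a2) * (s⁻¹ * b1 - s * b2) + d1 + d2))
              * K1 h g f n
          + (s - s⁻¹) * (q - q⁻¹) * (s⁻¹ * a1 * d2 + s * a2 * d1) * f n :=
  stmt15_general q s a1 a2 b1 b2 d0 d1 d2 d3 d4 hq hs hs0 hsum hd3 hd4 x h g hx hh hg
end
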